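/- Let agents have {−1,0,c}-ONSUB valuations for a positive integer c. Then every leximin allocation X is proportional up to one item (PROP1): for every agent i, either v_i(X_i) ≥ v_i(O)/n, or v_i(X_i + o) ≥ v_i(O)/n for some o ∉ X_i, or v_i(X_i − o) ≥ v_i(O)/n for some o ∈ X_i. -/

import Mathlib

open Finset

/-- A set function is submodular: `v ∅ = 0` and decreasing marginal gains. -/
def Submodular {α : Type*} [DecidableEq α] (v : Finset α → ℝ) : Prop :=
  v ∅ = 0 ∧ ∀ S T : Finset α, S ⊆ T → ∀ o ∉ T,
    v (insert o T) - v T ≤ v (insert o S) - v S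

/-- The telescoping sum vector of marginal gains along an ordering `l`. -/
def margList {α : Type*} [DecidableEq α] (v : Finset α → ℝ) (l : List α) : List ℝ :=
  (List.range l.length).map fun j =>
    v ((l.take (j + 1)).toFinset) - v ((l.take j).toFinset)

/-- The sorted (ascending) telescoping sum vector. -/
noncomputable def sortedVec {α : Type*} [DecidableEq α] (v : Finset α → ℝ) (l : List α) :
    List ℝ :=
  Multiset.sort (margList v l) (· ≤ ·)

/-- `l` is an ordering of the bundle `S`. -/
def IsOrdering {α : Type*} [DecidableEq α] (l : List α) (S : Finset α) : Prop :=
  l.Nodup ∧ l.toFinset = S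

/-- Order-neutrality: any two orderings of a bundle give the same sorted telescoping
sum vector. -/
def OrderNeutral {α : Type*} [DecidableEq α] (v : Finset α → ℝ) : Prop :=
  ∀ (S : Finset α) (l₁ l₂ : List α), IsOrdering l₁ S → IsOrdering l₂ S →
    sortedVec v l₁ = sortedVec v l₂
/-- A complete allocation: bundles are pairwise disjoint and cover all items. -/
def CompleteAlloc {α : Type*} [Fintype α] [DecidableEq α] {n : ℕ}
    (X : Fin n → Finset α) : Prop :=
  (∀ i j : Fin n, i ≠ j → Disjoint (X i) (X j)) ∧ Finset.univ.biUnion X = Finset.univ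

/-- The ascending-sorted utility vector of an allocation. -/
noncomputable def sUtil {α : Type*} [Fintype α] [DecidableEq α] {n : ℕ}
    (v : Fin n → Finset α → ℝ) (X : Fin n → Finset α) : List ℝ :=
  Multiset.sort (Multiset.map (fun i => v i (X i)) Finset.univ.val) (· ≤ ·)

/-- A leximin allocation: a complete allocation whose sorted utility vector is not
lexicographically dominated by that of any other complete allocation. -/
def Leximin {α : Type*} [Fintype α] [DecidableEq α] {n : ℕ}
    (v : Fin n → Finset α → ℝ) (X : Fin n → Finset α) : Prop :=
  CompleteAlloc X ∧ ∀ Y : Fin n → Finset α, CompleteAlloc Y →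
    ¬ List.Lex (· < ·) (sUtil v X) (sUtil v Y)

/-!
Suppose agent `i` violates PROP1 in a leximin allocation `X`; write `u = v i (X i)` and
`V = v i univ`.

If `u < 0`, some item of `X i` is a chore whose removal raises `u` by one, so `n (u + 1) < V`.
Then `i` can shed chores from the whole item set until its value exceeds `u`, discarding at most
`(n - 1) K` items with `K = ⌈-u - 1⌉`, and hand them out at most `K` per agent; every agent then
ends strictly above `u`, which contradicts leximin.

If `u ≥ 0`, a greedy extension of `X i` yields goods `E` outside `X i`, each worth `c` on top of
`X i`, such that every `B ⊇ X i` is worth at least `V - c |E \ B|`; and `n (u + c) < V`. Leximin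
forces each good of `E` held by another agent `h` to be worth `c` to `h` as well, so `h` can keep
either all of `X h` or a set of `⌊u / c⌋ + 1` such goods, worth more than `u`, and in both cases
keeps at most `(u + c) / c` goods of `E`. Giving all other items to `i` raises `i` above
`V - (n - 1)(u + c) > u`, while every other agent ends above `u` or no worse off than before.
-/

def TernaryMarginals {α : Type*} [DecidableEq α] (v : Finset α → ℝ) (c : ℝ) : Prop :=
  ∀ (S : Finset α) (o : α), o ∉ S → v (insert o S) - v S ∈ ({-1, 0, c} : Set ℝ)

section Valuation

variable {α : Type*} [DecidableEq α] {v : Finset α → ℝ} {c : ℝ} {S : Finset α} {o : α}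

namespace TernaryMarginals

lemma neg_one_le (hv : TernaryMarginals v c) (hc : 0 ≤ c) (ho : o ∉ S) :
    -1 ≤ v (insert o S) - v S := by
  obtain h | h | (h : _ = c) := hv S o ho <;> linarith

lemma eq_of_pos (hv : TernaryMarginals v c) (ho : o ∉ S) (h : 0 < v (insert o S) - v S) :
    v (insert o S) - v S = c := by
  obtain h' | h' | (h' : _ = c) := hv S o ho <;> linarith

lemma nonneg_of_ne_neg_one (hv : TernaryMarginals v c) (hc : 0 ≤ c) (ho : o ∉ S)
    (h : v (insert o S) - v S ≠ -1) : 0 ≤ v (insert o S) - v S := by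
  obtain h' | h' | (h' : _ = c) := hv S o ho
  exacts [absurd h' h, h'.ge, h' ▸ hc]

lemma sub_card_le (hv : TernaryMarginals v c) (hc : 0 ≤ c) (S D : Finset α) :
    v S - #D ≤ v (S ∪ D) := by
  induction D using Finset.induction_on with
  | empty => simp
  | insert d D hd ih =>
    rw [union_insert, card_insert_of_notMem hd, Nat.cast_succ]
    by_cases hdSD : d ∈ S ∪ D
    · rw [insert_eq_of_mem hdSD]; linarith
    · linarith [hv.neg_one_le hc hdSD]

end TernaryMarginals

namespace Submodular

lemma mul_card_le (hsub : Submodular v) {W : Finset α} (hWS : W ⊆ S)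
    (hW : ∀ x ∈ W, v (S.erase x) + c ≤ v S) : c * #W ≤ v W := by
  induction W using Finset.induction_on with
  | empty => simp [hsub.1]
  | insert x W hx ih =>
    have hxS := hWS (mem_insert_self x W)
    have hWSx : W ⊆ S.erase x := fun y hy =>
      mem_erase.2 ⟨fun h => hx (h ▸ hy), hWS (mem_insert_of_mem hy)⟩
    have hgain := hsub.2 W (S.erase x) hWSx x (notMem_erase x S)
    rw [insert_erase hxS] at hgain
    have := ih ((subset_insert x W).trans hWS) fun y hy => hW y (mem_insert_of_mem hy)
    rw [card_insert_of_notMem hx, Nat.cast_succ]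
    linarith [hW x (mem_insert_self x W)]

lemma le_sub_card (hsub : Submodular v) {F : Finset α}
    (hF : ∀ o ∉ F, v (insert o F) - v F ≤ -1) (D : Finset α) (hFD : Disjoint F D) :
    v (F ∪ D) ≤ v F - #D := by
  induction D using Finset.induction_on with
  | empty => simp
  | insert d D hd ih =>
    rw [disjoint_insert_right] at hFD
    have hdFD : d ∉ F ∪ D := by simp [hd, hFD.1]
    have := hsub.2 F (F ∪ D) subset_union_left d hdFD
    rw [union_insert, card_insert_of_notMem hd, Nat.cast_succ]
    linarith [ih hFD.2, hF d hFD.1]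

end Submodular

lemma exists_mem_erase_eq_add_one (hsub : Submodular v) (hv : TernaryMarginals v c)
    (hc : 0 ≤ c) (S : Finset α) (hS : v S < 0) : ∃ o ∈ S, v (S.erase o) = v S + 1 := by
  induction S using Finset.strongInduction with
  | H S ih =>
    obtain ⟨o, ho⟩ : S.Nonempty := by
      rw [nonempty_iff_ne_empty]; rintro rfl; linarith [hsub.1]
    have hmarg := hv.nonneg_of_ne_neg_one (S := S.erase o) hc (notMem_erase o S)
    rw [insert_erase ho] at hmarg
    by_cases hdrop : v (S.erase o) = v S + 1
    · exact ⟨o, ho, hdrop⟩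
    obtain ⟨o', ho', hdrop'⟩ := ih (S.erase o) (erase_ssubset ho)
      (by linarith [hmarg (by intro h; apply hdrop; linarith)])
    have ho'S := mem_of_mem_erase ho'
    -- `o'` is a chore at `(S.erase o).erase o'`, hence also at the larger set `S.erase o'`.
    have hle := hsub.2 ((S.erase o').erase o) (S.erase o') (erase_subset o _) o'
      (notMem_erase o' S)
    rw [insert_erase ho'S, erase_right_comm, insert_erase ho'] at hle
    have hge := hv.neg_one_le hc (notMem_erase o' S)
    rw [insert_erase ho'S] at hge
    exact ⟨o', ho'S, by linarith⟩

lemma exists_subset_card_sdiff_le_and_min_le (hsub : Submodular v) (hv : TernaryMarginals v c)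
    (hc : 0 ≤ c) (S : Finset α) (k : ℕ) :
    ∃ T ⊆ S, #(S \ T) ≤ k ∧ min (v S + k) 0 ≤ v T := by
  induction k with
  | zero => exact ⟨S, subset_rfl, by simp, by simp⟩
  | succ k ih =>
    obtain ⟨T, hTS, hcard, hval⟩ := ih
    by_cases hT : 0 ≤ v T
    · exact ⟨T, hTS, hcard.trans k.le_succ, (min_le_right _ _).trans hT⟩
    obtain ⟨o, ho, hvo⟩ := exists_mem_erase_eq_add_one hsub hv hc T (not_le.1 hT)
    refine ⟨T.erase o, (erase_subset o T).trans hTS, ?_, ?_⟩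
    · have : S \ T.erase o = insert o (S \ T) := by
        ext x; by_cases hx : x = o <;> simp [hx, ho, hTS ho]
      rw [this]; exact (card_insert_le _ _).trans (by omega)
    · have hST : v S + k ≤ v T := (min_le_iff.1 hval).resolve_right (by linarith)
      rw [hvo]; push_cast
      exact (min_le_left _ _).trans (by linarith)

/-- Invariant of the greedy extension of `X` to `S` by items of nonnegative marginal value,
`E` collecting those of marginal value `c`. -/
def IsGoodsBasis (v : Finset α → ℝ) (c : ℝ) (X S E : Finset α) : Prop :=
  X ⊆ S ∧ E ⊆ S \ X ∧ v S = v X + c * #E ∧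
    ∀ B, X ⊆ B → B ⊆ S → v X + c * #(B ∩ E) ≤ v B

lemma IsGoodsBasis.refl (X : Finset α) : IsGoodsBasis v c X X ∅ :=
  ⟨subset_rfl, empty_subset _, by simp, fun B hXB hBX => by simp [hBX.antisymm hXB]⟩

lemma IsGoodsBasis.exists_insert (hsub : Submodular v) (hv : TernaryMarginals v c) {X E : Finset α}
    (h : IsGoodsBasis v c X S E) (ho : o ∉ S) (hm : 0 ≤ v (insert o S) - v S) :
    ∃ E', IsGoodsBasis v c X (insert o S) E' := by
  obtain ⟨hXS, hES, hvS, hB⟩ := h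
  have hoE : o ∉ E := fun hoE => ho (mem_sdiff.1 (hES hoE)).1
  have hB' : ∀ B, X ⊆ B → B ⊆ insert o S → o ∈ B →
      v X + c * #(B ∩ E) + (v (insert o S) - v S) ≤ v B := by
    intro B hXB hBS hoB
    have hXB' : X ⊆ B.erase o := fun x hx => mem_erase.2 ⟨fun h => ho (h ▸ hXS hx), hXB hx⟩
    have hBS' : B.erase o ⊆ S := fun x hx => by
      simpa [(mem_erase.1 hx).1] using hBS (mem_of_mem_erase hx)
    have hmarg := hsub.2 (B.erase o) S hBS' o ho
    rw [insert_erase hoB] at hmarg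
    have hBE : B.erase o ∩ E = B ∩ E := by rw [erase_inter, erase_eq_of_notMem (by simp [hoE])]
    linarith [hBE ▸ hB _ hXB' hBS']
  have hsmall : ∀ B, X ⊆ B → B ⊆ insert o S → o ∉ B → v X + c * #(B ∩ E) ≤ v B :=
    fun B hXB hBS hoB => hB B hXB fun x hx => by
      simpa [show x ≠ o by rintro rfl; exact hoB hx] using hBS hx
  have hXoS : X ⊆ insert o S := hXS.trans (subset_insert o S)
  have hoX : o ∉ X := fun hoX => ho (hXS hoX)
  have hES' : E ⊆ insert o S \ X := hES.trans (sdiff_subset_sdiff (subset_insert o S) le_rfl)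
  rcases hm.eq_or_lt with hzero | hpos
  · refine ⟨E, hXoS, hES', by linarith, fun B hXB hBS => ?_⟩
    by_cases hoB : o ∈ B
    · linarith [hB' B hXB hBS hoB]
    · exact hsmall B hXB hBS hoB
  · have hc := hv.eq_of_pos ho hpos
    refine ⟨insert o E, hXoS, insert_subset (by simp [hoX]) hES', ?_, fun B hXB hBS => ?_⟩
    · rw [card_insert_of_notMem hoE, Nat.cast_succ]; linarith
    by_cases hoB : o ∈ B
    · rw [inter_insert_of_mem hoB, card_insert_of_notMem (by simp [hoE]), Nat.cast_succ]
      linarith [hB' B hXB hBS hoB]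
    · rw [inter_insert_of_notMem hoB]
      exact hsmall B hXB hBS hoB

lemma exists_isGoodsBasis_forall_le_neg_one [Fintype α] (hsub : Submodular v)
    (hv : TernaryMarginals v c) (hc : 0 ≤ c) (X : Finset α) :
    ∃ F E, IsGoodsBasis v c X F E ∧ ∀ o ∉ F, v (insert o F) - v F ≤ -1 := by
  classical
  obtain ⟨F, hF, hmax⟩ := (univ.filter fun S => ∃ E, IsGoodsBasis v c X S E).exists_max_image
    card ⟨X, mem_filter.2 ⟨mem_univ X, ∅, .refl X⟩⟩
  obtain ⟨E, hFE⟩ := (mem_filter.1 hF).2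
  refine ⟨F, E, hFE, fun o ho => ?_⟩
  by_contra! hlt
  obtain ⟨E', hE'⟩ := hFE.exists_insert hsub hv ho (hv.nonneg_of_ne_neg_one hc ho hlt.ne')
  have := hmax (insert o F) (mem_filter.2 ⟨mem_univ _, E', hE'⟩)
  rw [card_insert_of_notMem ho] at this
  omega

lemma exists_goods [Fintype α] (hsub : Submodular v) (hv : TernaryMarginals v c) (hc : 0 ≤ c)
    (X : Finset α) :
    ∃ E, Disjoint E X ∧ (∀ e ∈ E, v X + c ≤ v (insert e X)) ∧
      ∀ B, X ⊆ B → v univ - c * #(E \ B) ≤ v B := by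
  obtain ⟨F, E, ⟨hXF, hEF, hvF, hB⟩, htail⟩ :=
    exists_isGoodsBasis_forall_le_neg_one hsub hv hc X
  refine ⟨E, disjoint_left.2 fun e he => (mem_sdiff.1 (hEF he)).2, fun e he => ?_,
    fun B hXB => ?_⟩
  · have hcard : 1 ≤ #(insert e X ∩ E) := card_pos.2 ⟨e, by simp [he]⟩
    have := hB (insert e X) (subset_insert e X) (insert_subset (mem_sdiff.1 (hEF he)).1 hXF)
    nlinarith [(Nat.one_le_cast (α := ℝ)).2 hcard]
  · have hinside := hB (B ∩ F) (subset_inter hXB hXF) inter_subset_right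
    have houtside := hv.sub_card_le hc (B ∩ F) (B \ F)
    rw [show B ∩ F ∪ B \ F = B from sup_inf_sdiff B F] at houtside
    have hrest := hsub.le_sub_card htail (univ \ F) disjoint_sdiff
    rw [union_sdiff_of_subset (subset_univ F)] at hrest
    have hBF : #(B \ F) ≤ #(univ \ F) := card_le_card (sdiff_subset_sdiff (subset_univ B) le_rfl)
    have hBE : B ∩ F ∩ E = E ∩ B := by
      rw [inter_assoc, inter_eq_right.2 fun e he => (mem_sdiff.1 (hEF he)).1, inter_comm]
    have hsplit : c * #(E \ B) + c * #(E ∩ B) = c * #E := by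
      rw [← mul_add, ← Nat.cast_add, card_sdiff_add_card_inter]
    rw [hBE] at hinside
    have : (#(B \ F) : ℝ) ≤ #(univ \ F) := by exact_mod_cast hBF
    linarith

lemma exists_subset_mul_card_inter_le (hsub : Submodular v) (hc : 0 < c) {u : ℝ} (hu : 0 ≤ u)
    {E : Finset α} (hE : ∀ x ∈ E ∩ S, v (S.erase x) + c ≤ v S) :
    ∃ T ⊆ S, c * #(E ∩ T) ≤ u + c ∧ (u < v T ∨ v S ≤ v T) := by
  by_cases hfew : c * #(E ∩ S) ≤ u + c
  · exact ⟨S, subset_rfl, hfew, Or.inr le_rfl⟩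
  -- otherwise keep just `k = ⌊u / c⌋ + 1` of the goods, which are worth `c * k ∈ (u, u + c]`
  set k := ⌊u / c⌋₊ + 1
  have hk_gt : u < c * k := by
    have := Nat.lt_floor_add_one (u / c); push_cast [k]; rwa [div_lt_iff₀' hc] at this
  have hk_le : c * k ≤ u + c := by
    have := Nat.floor_le (div_nonneg hu hc.le); push_cast [k]; rw [le_div_iff₀' hc] at this
    linarith
  have hkE : k ≤ #(E ∩ S) := by
    by_contra! h
    have : (#(E ∩ S) : ℝ) + 1 ≤ k := by exact_mod_cast h
    nlinarith
  obtain ⟨W, hW, hWk⟩ := exists_subset_card_eq hkE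
  have hWS : W ⊆ S := hW.trans inter_subset_right
  refine ⟨W, hWS, by rwa [inter_eq_right.2 (hW.trans inter_subset_left), hWk], Or.inl ?_⟩
  have := hsub.mul_card_le hWS fun x hx => hE x (hW hx)
  rw [hWk] at this
  linarith

end Valuation

theorem exists_mapsTo_card_fiber_le {α ι : Type*} [DecidableEq α] [DecidableEq ι] [Nonempty ι]
    {s : Finset α} {t : Finset ι} {K : ℕ} (hst : #s ≤ #t * K) :
    ∃ g : α → ι, (∀ a ∈ s, g a ∈ t) ∧ ∀ j, #{a ∈ s | g a = j} ≤ K := by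
  induction s using Finset.induction_on with
  | empty => exact ⟨fun _ => Classical.arbitrary ι, by simp, by simp⟩
  | insert a s ha ih =>
    rw [card_insert_of_notMem ha] at hst
    obtain ⟨g, hgt, hgK⟩ := ih (by omega)
    obtain ⟨j₀, hj₀, hj₀K⟩ :=
      exists_card_fiber_lt_of_card_lt_mul (f := g) (by omega : #s < #t * K)
    have hfib : ∀ j, {x ∈ s | Function.update g a j₀ x = j} = {x ∈ s | g x = j} :=
      fun j => filter_congr fun x hx => by rw [Function.update_of_ne (ne_of_mem_of_not_mem hx ha)]
    refine ⟨Function.update g a j₀, fun x hx => ?_, fun j => ?_⟩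
    · rcases mem_insert.1 hx with rfl | hx
      · simpa
      · rw [Function.update_of_ne (ne_of_mem_of_not_mem hx ha)]; exact hgt x hx
    · rw [filter_insert, hfib, Function.update_self]
      split_ifs with h
      · exact (card_insert_le _ _).trans (h ▸ hj₀K)
      · exact hgK j

theorem List.lex_lt_of_countP_le {β : Type*} [LinearOrder β] (t : β) {l l' : List β}
    (hl : l.Pairwise (· ≤ ·)) (hl' : l'.Pairwise (· ≤ ·)) (hlen : l.length = l'.length)
    (hle : ∀ x ≤ t, l'.countP (· ≤ x) ≤ l.countP (· ≤ x))
    (hlt : l'.countP (· ≤ t) < l.countP (· ≤ t)) : List.Lex (· < ·) l l' := by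
  induction l generalizing l' with
  | nil => simp at hlt
  | cons a l ih =>
    cases l' with
    | nil => simp at hlen
    | cons a' l' =>
      rcases lt_trichotomy a a' with h | rfl | h
      · exact .rel h
      · refine .cons (ih hl.of_cons hl'.of_cons (by simpa using hlen) (fun x hx => ?_) ?_)
        · have := hle x hx; simp only [List.countP_cons] at this; omega
        · simp only [List.countP_cons] at hlt; omega
      · exfalso
        have hnone : ∀ x < a, (a :: l).countP (· ≤ x) = 0 := by
          intro x hx
          refine List.countP_eq_zero.2 fun y hy => ?_
          have : a ≤ y := by
            rcases List.mem_cons.1 hy with rfl | hy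
            exacts [le_rfl, List.rel_of_pairwise_cons hl hy]
          simpa using hx.trans_le this
        rcases le_or_gt a' t with ha't | hta'
        · have := hle a' ha't
          rw [hnone a' h, List.countP_cons] at this
          simp at this
        · rw [hnone t (hta'.trans h)] at hlt
          omega

section Allocation

variable {α : Type*} [Fintype α] [DecidableEq α] {n : ℕ} {v : Fin n → Finset α → ℝ}
  {X : Fin n → Finset α}

lemma countP_sUtil (v : Fin n → Finset α → ℝ) (X : Fin n → Finset α) (x : ℝ) :
    (sUtil v X).countP (· ≤ x) = #{j | v j (X j) ≤ x} := by
  rw [← Multiset.coe_countP, sUtil, Multiset.sort_eq, Multiset.countP_map]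
  rfl

lemma length_sUtil (v : Fin n → Finset α → ℝ) (X : Fin n → Finset α) :
    (sUtil v X).length = n := by
  simp [sUtil]

theorem Leximin.le_of_forall_lt_or_le {Y : Fin n → Finset α} (hX : Leximin v X)
    (hY : CompleteAlloc Y) (t : ℝ) (hXY : ∀ j, t < v j (Y j) ∨ v j (X j) ≤ v j (Y j))
    {j : Fin n} (hj : v j (X j) ≤ t) : v j (Y j) ≤ t := by
  by_contra! hjt
  refine hX.2 Y hY (List.lex_lt_of_countP_le t (Multiset.pairwise_sort ..)
    (Multiset.pairwise_sort ..) (by rw [length_sUtil, length_sUtil]) (fun x hx => ?_) ?_)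
  all_goals rw [countP_sUtil, countP_sUtil]
  · refine card_le_card fun k hk => ?_
    simp only [mem_filter, mem_univ, true_and] at hk ⊢
    rcases hXY k with h | h <;> linarith
  · refine card_lt_card
      ((ssubset_iff_of_subset fun k hk => ?_).2 ⟨j, by simpa, by simpa using hjt⟩)
    simp only [mem_filter, mem_univ, true_and] at hk ⊢
    rcases hXY k with h | h <;> linarith

def assignRest (i : Fin n) (P : Fin n → Finset α) : Fin n → Finset α :=
  Function.update P i (univ \ (univ.erase i).biUnion P)

lemma assignRest_self (i : Fin n) (P : Fin n → Finset α) :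
    assignRest i P i = univ \ (univ.erase i).biUnion P :=
  Function.update_self ..

lemma assignRest_of_ne {i j : Fin n} (P : Fin n → Finset α) (hj : j ≠ i) :
    assignRest i P j = P j :=
  Function.update_of_ne hj ..

lemma completeAlloc_assignRest (i : Fin n) {P : Fin n → Finset α}
    (hP : ∀ j k, j ≠ i → k ≠ i → j ≠ k → Disjoint (P j) (P k)) :
    CompleteAlloc (assignRest i P) := by
  have hrest : ∀ k, k ≠ i → Disjoint (assignRest i P i) (P k) := fun k hk => by
    rw [assignRest_self]
    exact disjoint_sdiff_self_left.mono_right (subset_biUnion_of_mem P (by simpa using hk))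
  refine ⟨fun j k hjk => ?_, eq_univ_of_forall fun a => ?_⟩
  · rcases eq_or_ne j i with rfl | hj
    · rw [assignRest_of_ne P hjk.symm]; exact hrest k hjk.symm
    rcases eq_or_ne k i with rfl | hk
    · rw [assignRest_of_ne P hj]; exact (hrest j hj).symm
    rw [assignRest_of_ne P hj, assignRest_of_ne P hk]
    exact hP j k hj hk hjk
  · simp only [mem_biUnion, mem_univ, true_and]
    by_cases ha : a ∈ (univ.erase i).biUnion P
    · obtain ⟨j, hj, haj⟩ := mem_biUnion.1 ha
      exact ⟨j, by rwa [assignRest_of_ne P (ne_of_mem_erase hj)]⟩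
    · exact ⟨i, by simpa [assignRest_self] using ha⟩

lemma card_sdiff_assignRest_self_le (i : Fin n) (P : Fin n → Finset α) (E : Finset α) :
    #(E \ assignRest i P i) ≤ ∑ j ∈ univ.erase i, #(E ∩ P j) := by
  refine (card_le_card fun a ha => ?_).trans card_biUnion_le
  rw [← inter_biUnion]
  simp_all [assignRest_self]

lemma exists_completeAlloc_card_le (i : Fin n) (T : Finset α) {K : ℕ}
    (hK : #(univ \ T) ≤ (n - 1) * K) :
    ∃ Y, CompleteAlloc Y ∧ Y i = T ∧ ∀ j ≠ i, #(Y j) ≤ K := by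
  have : Nonempty (Fin n) := ⟨i⟩
  obtain ⟨g, hg, hgK⟩ := exists_mapsTo_card_fiber_le (s := univ \ T) (t := univ.erase i)
    (K := K) (by rwa [card_erase_of_mem (mem_univ i), card_univ, Fintype.card_fin])
  refine ⟨assignRest i fun j => {a ∈ univ \ T | g a = j}, completeAlloc_assignRest i
    fun j k _ _ hjk => disjoint_filter.2 fun _ _ h₁ h₂ => hjk (h₁ ▸ h₂), ?_,
    fun j hj => by rw [assignRest_of_ne _ hj]; exact hgK j⟩
  rw [assignRest_self, biUnion_filter_eq_of_maps_to hg, sdiff_sdiff_right_self, inf_eq_inter,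
    univ_inter]

namespace CompleteAlloc

lemma mem_iff_forall_ne (hX : CompleteAlloc X) {i : Fin n} {a : α} :
    a ∈ X i ↔ ∀ j ≠ i, a ∉ X j := by
  refine ⟨fun ha j hj haj => disjoint_left.1 (hX.1 j i hj) haj ha, fun h => ?_⟩
  obtain ⟨j, -, haj⟩ := mem_biUnion.1 (hX.2.symm ▸ mem_univ a : a ∈ univ.biUnion X)
  by_contra hai
  exact h j (fun hji => hai (hji ▸ haj)) haj

lemma assignRest_of_subset (hX : CompleteAlloc X) (i : Fin n) {T : Fin n → Finset α}
    (hT : ∀ j, T j ⊆ X j) : CompleteAlloc (assignRest i T) :=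
  completeAlloc_assignRest i fun j k _ _ hjk => (hX.1 j k hjk).mono (hT j) (hT k)

lemma subset_assignRest_self (hX : CompleteAlloc X) (i : Fin n) {T : Fin n → Finset α}
    (hT : ∀ j, T j ⊆ X j) : X i ⊆ assignRest i T i := fun a ha => by
  simp only [assignRest_self, mem_sdiff, mem_univ, mem_biUnion, mem_erase, true_and, and_true,
    not_exists, not_and]
  exact fun j hj haj => hX.mem_iff_forall_ne.1 ha j hj (hT j haj)

end CompleteAlloc

/-- Otherwise moving `e` from `h` to `i` would be a Pareto improvement. -/
lemma Leximin.erase_lt (hX : Leximin v X) {i h : Fin n} {e : α} (he : e ∈ X h) (hei : e ∉ X i)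
    (hgain : v i (X i) < v i (insert e (X i))) : v h ((X h).erase e) < v h (X h) := by
  by_contra! hloss
  set Y := assignRest i fun j => (X j).erase e with hYdef
  have hYi : Y i = insert e (X i) := by
    ext a
    rw [hYdef, assignRest_self, mem_insert, hX.1.mem_iff_forall_ne]
    by_cases hae : a = e <;> simp [hae]
  have hY : CompleteAlloc Y := hX.1.assignRest_of_subset i fun j => erase_subset e _
  refine (hX.le_of_forall_lt_or_le hY (v i (X i)) (fun j => ?_) le_rfl).not_gt (hYi ▸ hgain)
  rcases eq_or_ne j i with rfl | hji
  · exact Or.inl (hYi ▸ hgain)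
  rw [hYdef, assignRest_of_ne _ hji]
  rcases eq_or_ne j h with rfl | hjh
  · exact Or.inr hloss
  · rw [erase_eq_of_notMem (disjoint_left.1 (hX.1.1 h j hjh.symm) he)]
    exact Or.inr le_rfl

variable {c : ℝ}

theorem Leximin.prop1_of_nonneg (hX : Leximin v X) (hc : 0 < c) (hsub : ∀ j, Submodular (v j))
    (hv : ∀ j, TernaryMarginals (v j) c) (i : Fin n) (hu : 0 ≤ v i (X i)) :
    v i univ / n ≤ v i (X i) ∨ ∃ o ∉ X i, v i univ / n ≤ v i (insert o (X i)) := by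
  by_contra! ⟨hXi, hins⟩
  set u := v i (X i)
  have hn : (0 : ℝ) < n := by exact_mod_cast i.pos
  rw [lt_div_iff₀ hn] at hXi
  obtain ⟨E, hEX, hEgain, hEbound⟩ := exists_goods (hsub i) (hv i) hc.le (X i)
  obtain rfl | ⟨e₀, he₀⟩ := E.eq_empty_or_nonempty
  · have := hEbound (X i) subset_rfl
    simp only [empty_sdiff, card_empty, CharP.cast_eq_zero, mul_zero, sub_zero] at this
    nlinarith [(Nat.one_le_cast (α := ℝ)).2 i.pos]
  have hV : n * (u + c) < v i univ := by
    have := hins e₀ (disjoint_left.1 hEX he₀)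
    rw [lt_div_iff₀ hn] at this
    nlinarith [hEgain e₀ he₀]
  have hgood : ∀ h, ∀ x ∈ E ∩ X h, v h ((X h).erase x) + c ≤ v h (X h) := by
    intro h x hx
    have hxX := (mem_inter.1 hx).2
    have hlt := hX.erase_lt hxX (disjoint_left.1 hEX (mem_inter.1 hx).1)
      (by linarith [hEgain x (mem_inter.1 hx).1])
    have := (hv h).eq_of_pos (notMem_erase x (X h)) (by rw [insert_erase hxX]; linarith)
    rw [insert_erase hxX] at this
    linarith
  choose T hTX hTE hTval using fun h => exists_subset_mul_card_inter_le (hsub h) hc hu (hgood h)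
  have hmissing : c * #(E \ assignRest i T i) ≤ (n - 1) * (u + c) :=
    calc c * #(E \ assignRest i T i) ≤ ∑ h ∈ univ.erase i, c * #(E ∩ T h) := by
          rw [← mul_sum]; gcongr; exact_mod_cast card_sdiff_assignRest_self_le i T E
      _ ≤ ∑ h ∈ univ.erase i, (u + c) := sum_le_sum fun h _ => hTE h
      _ = (n - 1) * (u + c) := by
          rw [sum_const, card_erase_of_mem (mem_univ i), card_univ, Fintype.card_fin,
            nsmul_eq_mul, Nat.cast_sub i.pos, Nat.cast_one]
  have hYi : u < v i (assignRest i T i) := by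
    have := hEbound _ (hX.1.subset_assignRest_self i hTX)
    linarith
  refine (hX.le_of_forall_lt_or_le (hX.1.assignRest_of_subset i hTX) u (fun j => ?_)
    le_rfl).not_gt hYi
  rcases eq_or_ne j i with rfl | hji
  · exact Or.inl hYi
  · rw [assignRest_of_ne T hji]; exact hTval j

theorem Leximin.prop1_of_neg (hX : Leximin v X) (hc : 0 ≤ c) (hsub : ∀ j, Submodular (v j))
    (hv : ∀ j, TernaryMarginals (v j) c) (i : Fin n) (hu : v i (X i) < 0) :
    ∃ o ∈ X i, v i univ / n ≤ v i ((X i).erase o) := by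
  by_contra! herase
  set u := v i (X i)
  have hn : (0 : ℝ) < n := by exact_mod_cast i.pos
  obtain ⟨o, ho, hvo⟩ := exists_mem_erase_eq_add_one (hsub i) (hv i) hc (X i) hu
  have hV : n * (u + 1) < v i univ := by
    have := herase o ho
    rw [lt_div_iff₀ hn, hvo] at this
    linarith
  -- every other agent may be handed up to `K` items: worth at least `-K > u` to them
  set K := ⌈-u - 1⌉₊
  have hK_ge : -u - 1 ≤ K := Nat.le_ceil _
  have hK_lt : (K : ℝ) < -u := by
    rcases le_or_gt (-u - 1) 0 with h | h
    · rw [show K = 0 from Nat.ceil_eq_zero.2 h, Nat.cast_zero]; linarith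
    · linarith [Nat.ceil_lt_add_one h.le]
  obtain ⟨T, -, hTcard, hTval⟩ :=
    exists_subset_card_sdiff_le_and_min_le (hsub i) (hv i) hc univ ((n - 1) * K)
  have huT : u < v i T := by
    refine lt_of_lt_of_le (lt_min ?_ (by linarith)) hTval
    push_cast [Nat.cast_sub i.pos]
    nlinarith
  obtain ⟨Y, hY, hYi, hYK⟩ := exists_completeAlloc_card_le i T hTcard
  refine (hX.le_of_forall_lt_or_le hY u (fun j => Or.inl ?_) le_rfl).not_gt (hYi ▸ huT)
  rcases eq_or_ne j i with rfl | hji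
  · rwa [hYi]
  · have hval := (hv j).sub_card_le hc ∅ (Y j)
    rw [empty_union, (hsub j).1] at hval
    have : (#(Y j) : ℝ) ≤ K := by exact_mod_cast hYK j hji
    linarith

end Allocation

theorem leximin_is_PROP1_general {α : Type*} [Fintype α] [DecidableEq α]
    (n : ℕ) (c : ℕ) (hc : 0 < c) (v : Fin n → Finset α → ℝ)
    (hsub : ∀ i, Submodular (v i))
    (hvals : ∀ i (S : Finset α) (o : α), o ∉ S →
      v i (insert o S) - v i S ∈ ({-1, 0, (c : ℝ)} : Set ℝ))
    (X : Fin n → Finset α) (hlex : Leximin v X) :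
    ∀ i : Fin n,
      v i (X i) ≥ v i Finset.univ / n ∨
      (∃ o ∉ X i, v i (insert o (X i)) ≥ v i Finset.univ / n) ∨
      (∃ o ∈ X i, v i ((X i).erase o) ≥ v i Finset.univ / n) := by
  intro i
  rcases le_or_gt 0 (v i (X i)) with hu | hu
  · rcases hlex.prop1_of_nonneg (by exact_mod_cast hc) hsub hvals i hu with h | ⟨o, ho, h⟩
    exacts [Or.inl h, Or.inr (Or.inl ⟨o, ho, h⟩)]
  · obtain ⟨o, ho, h⟩ := hlex.prop1_of_neg (Nat.cast_nonneg c) hsub hvals i hu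
    exact Or.inr (Or.inr ⟨o, ho, h⟩)

/-- with `{-1, 0, c}`-ONSUB valuations, every leximin allocation is
PROP1. -/
theorem leximin_is_PROP1 {α : Type*} [Fintype α] [DecidableEq α]
    (n : ℕ) (hn : 0 < n) (c : ℕ) (hc : 0 < c) (v : Fin n → Finset α → ℝ)
    (hsub : ∀ i, Submodular (v i)) (hon : ∀ i, OrderNeutral (v i))
    (hvals : ∀ i (S : Finset α) (o : α), o ∉ S →
      v i (insert o S) - v i S ∈ ({-1, 0, (c : ℝ)} : Set ℝ))
    (X : Fin n → Finset α) (hlex : Leximin v X) :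
    ∀ i : Fin n,
      v i (X i) ≥ v i Finset.univ / n ∨
      (∃ o ∉ X i, v i (insert o (X i)) ≥ v i Finset.univ / n) ∨
      (∃ o ∈ X i, v i ((X i).erase o) ≥ v i Finset.univ / n) :=
  leximin_is_PROP1_general n c hc v hsub hvals X hlex
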